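/- arXiv:1811.11407 — 5 statements merged into one kernel-verified Lean document; each statement's English description precedes it below -/
import Mathlib

section
/- Suppose X, W are elements of a ring satisfying the two Heun–Askey–Wilson relations: [X,[X,W]] = ρ·XWX + e₁·X³ + b₁·X² + b₂·{X,W} + b₃·X + b₄·W + b₅ and [W,[W,X]] = ρ·WXW + e₂·X³ + e₃·XWX + e₄·X² + b₁'·{X,W} + b₂·W² + b₃'·W + b₆·X + b₇, with Z = [X,W]. Then [[X,Z],W] + [[Z,W],X] = (e₁·(ρ+2) + e₁ − e₃)·XZX + (b₁ − b₁' + e₁·b₂)·{X,Z} + (b₃ − b₃' + e₁·b₄)·Z. -/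
/-!
Substituting the two relations for `⁅X, Z⁆` and `⁅Z, W⁆ = ⁅W, ⁅W, X⁆⁆`, the left side becomes
`⁅A, W⁆ + ⁅B, X⁆`, where `A` and `B` are the right-hand sides of the relations. In this sum the
`ρ`- and `b₂`-terms cancel in pairs and the central terms drop out, leaving `e₁ ⁅X³, W⁆` plus
multiples of `XZX`, `{X, Z}` and `Z`. Finally `⁅X³, W⁆ = 3 XZX + ⁅X, ⁅X, Z⁆⁆`, and a second use
of the first relation turns `⁅X, ⁅X, Z⁆⁆ = ⁅X, A⁆` into `ρ XZX + b₂ {X, Z} + b₄ Z`.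
-/

section

variable {k R : Type*} [CommRing k] [Ring R] [Algebra k R]

theorem lie_pow_three_left (X W : R) :
    ⁅X ^ 3, W⁆ = 3 • (X * ⁅X, W⁆ * X) + ⁅X, ⁅X, ⁅X, W⁆⁆⁆ := by
  simp only [Ring.lie_def]
  noncomm_ring

theorem lie_haw_rhs₁ (ρ e₁ b₁ b₂ b₃ b₄ b₅ : k) (X W : R) :
    ⁅X, ρ • (X * W * X) + e₁ • X ^ 3 + b₁ • X ^ 2 + b₂ • (X * W + W * X)
        + b₃ • X + b₄ • W + b₅ • (1 : R)⁆ =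
      ρ • (X * ⁅X, W⁆ * X) + b₂ • (X * ⁅X, W⁆ + ⁅X, W⁆ * X) + b₄ • ⁅X, W⁆ := by
  simp only [Ring.lie_def, pow_succ, pow_zero, one_mul, mul_one, smul_add, smul_sub,
    mul_add, add_mul, mul_sub, sub_mul, mul_smul_comm, smul_mul_assoc, mul_assoc]
  module

theorem haw_rhs₁_lie_add_haw_rhs₂_lie
    (ρ e₁ e₂ e₃ e₄ b₁ b₂ b₃ b₄ b₅ b₁' b₃' b₆ b₇ : k) (X W : R) :
    ⁅ρ • (X * W * X) + e₁ • X ^ 3 + b₁ • X ^ 2 + b₂ • (X * W + W * X)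
        + b₃ • X + b₄ • W + b₅ • (1 : R), W⁆ +
      ⁅ρ • (W * X * W) + e₂ • X ^ 3 + e₃ • (X * W * X) + e₄ • X ^ 2
        + b₁' • (X * W + W * X) + b₂ • W ^ 2 + b₃' • W + b₆ • X + b₇ • (1 : R), X⁆ =
      e₁ • ⁅X ^ 3, W⁆ - e₃ • (X * ⁅X, W⁆ * X) + (b₁ - b₁') • (X * ⁅X, W⁆ + ⁅X, W⁆ * X)
        + (b₃ - b₃') • ⁅X, W⁆ := by
  simp only [Ring.lie_def, pow_succ, pow_zero, one_mul, mul_one, smul_add, smul_sub,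
    mul_add, add_mul, mul_sub, sub_mul, mul_smul_comm, smul_mul_assoc, mul_assoc]
  module

end

/-- Consequence of the HAW relations: the sum of the two iterated commutators
`[[X,Z],W] + [[Z,W],X]` with `Z = [X,W]`. -/
theorem stmt_4 {k R : Type*} [CommRing k] [Ring R] [Algebra k R]
    (ρ e₁ e₂ e₃ e₄ b₁ b₂ b₃ b₄ b₅ b₁' b₃' b₆ b₇ : k) (X W : R)
    (h1 : X * (X * W - W * X) - (X * W - W * X) * X =
      ρ • (X * W * X) + e₁ • X ^ 3 + b₁ • X ^ 2 + b₂ • (X * W + W * X)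
        + b₃ • X + b₄ • W + b₅ • (1 : R))
    (h2 : W * (W * X - X * W) - (W * X - X * W) * W =
      ρ • (W * X * W) + e₂ • X ^ 3 + e₃ • (X * W * X) + e₄ • X ^ 2
        + b₁' • (X * W + W * X) + b₂ • W ^ 2 + b₃' • W + b₆ • X + b₇ • (1 : R)) :
    (let Z := X * W - W * X
    ((X * Z - Z * X) * W - W * (X * Z - Z * X)) +
      ((Z * W - W * Z) * X - X * (Z * W - W * Z)) =
      (e₁ * (ρ + 2) + e₁ - e₃) • (X * Z * X)
        + (b₁ - b₁' + e₁ * b₂) • (X * Z + Z * X)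
        + (b₃ - b₃' + e₁ * b₄) • Z) := by
  intro Z
  simp only [Z, ← Ring.lie_def] at h1 h2 ⊢
  have hZW : ⁅⁅X, W⁆, W⁆ = ⁅W, ⁅W, X⁆⁆ := by
    simp only [Ring.lie_def]
    noncomm_ring
  rw [h1, hZW, h2, haw_rhs₁_lie_add_haw_rhs₂_lie, lie_pow_three_left, h1, lie_haw_rhs₁]
  module
end

section
/- Suppose X, W satisfy the Heun–Askey–Wilson relations as above, with Z = [X,W]. If the Jacobi identity [[X,Z],W] + [[Z,W],X] + [[W,X],Z] = 0 is imposed and the elements XZX, {X,Z}, Z together with the identity are linearly independent over the scalars, then the structure constants satisfy e₃ = e₁·(ρ+3), b₁' = b₁ + e₁·b₂, and b₃' = b₃ + e₁·b₄. -/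
/-!
Write `Z = ⁅X, W⁆`. The Jacobi identity gives `⁅⁅X, Z⁆, W⁆ + ⁅⁅W, ⁅W, X⁆⁆, X⁆ = 0`, so bracketing
the first relation with `W` and the second with `X` gives `⁅A₁, W⁆ + ⁅A₂, X⁆ = 0`, where `A₁`, `A₂`
are the right-hand sides. Expanding, the only term not visibly in the span of `XZX`, `{X, Z}`, `Z`
is `e₁ (X²Z + XZX + ZX²) = e₁ (3 XZX + ⁅X, ⁅X, Z⁆⁆)`, and using the first relation once more,
`⁅X, ⁅X, Z⁆⁆ = ⁅X, A₁⁆ = ρ XZX + b₂ {X, Z} + b₄ Z`. What remains is a linear relation among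
`XZX`, `{X, Z}`, `Z`, whose coefficients must vanish.
-/

theorem lie_lie_lie_add_lie_lie_lie_eq_zero {L : Type*} [LieRing L] (X W : L) :
    ⁅⁅X, ⁅X, W⁆⁆, W⁆ + ⁅⁅W, ⁅W, X⁆⁆, X⁆ = 0 := by
  have jacobi := lie_jacobi W X ⁅X, W⁆
  rw [← lie_skew W X, lie_neg, lie_self, neg_zero, add_zero] at jacobi
  rw [← lie_skew W X, lie_neg, neg_lie, ← lie_skew, ← lie_skew ⁅W, ⁅X, W⁆⁆,
    ← lie_skew W ⁅X, W⁆, lie_neg, ← neg_eq_zero, ← jacobi]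
  abel

theorem LinearIndependent.eq_zero_of_fin_four {k M : Type*} [Ring k] [AddCommGroup M]
    [Module k M] {u v w x : M} (h : LinearIndependent k ![u, v, w, x]) {a b c : k}
    (habc : a • u + b • v + c • w = 0) : a = 0 ∧ b = 0 ∧ c = 0 := by
  have hzero := Fintype.linearIndependent_iff.mp h ![a, b, c, 0]
    (by simpa [Fin.sum_univ_four] using habc)
  exact ⟨hzero 0, hzero 1, hzero 2⟩

section HeunAskeyWilson

variable {k R : Type*} [CommRing k] [Ring R] [Algebra k R]

def hawRhs₁ (ρ e₁ b₁ b₂ b₃ b₄ b₅ : k) (X W : R) : R :=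
  ρ • (X * W * X) + e₁ • X ^ 3 + b₁ • X ^ 2 + b₂ • (X * W + W * X) + b₃ • X + b₄ • W
    + b₅ • (1 : R)

def hawRhs₂ (ρ e₂ e₃ e₄ b₁' b₂ b₃' b₆ b₇ : k) (X W : R) : R :=
  ρ • (W * X * W) + e₂ • X ^ 3 + e₃ • (X * W * X) + e₄ • X ^ 2
    + b₁' • (X * W + W * X) + b₂ • W ^ 2 + b₃' • W + b₆ • X + b₇ • (1 : R)

theorem lie_hawRhs₁ (ρ e₁ b₁ b₂ b₃ b₄ b₅ : k) (X W : R) :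
    ⁅X, hawRhs₁ ρ e₁ b₁ b₂ b₃ b₄ b₅ X W⁆ =
      ρ • (X * ⁅X, W⁆ * X) + b₂ • (X * ⁅X, W⁆ + ⁅X, W⁆ * X) + b₄ • ⁅X, W⁆ := by
  simp only [hawRhs₁, Ring.lie_def, mul_add, add_mul, mul_sub, sub_mul, smul_add,
    smul_mul_assoc, mul_smul_comm, mul_assoc, mul_one, one_mul, pow_succ, pow_zero]
  module

theorem hawRhs₁_lie_add_hawRhs₂_lie
    (ρ e₁ e₂ e₃ e₄ b₁ b₂ b₃ b₄ b₅ b₁' b₃' b₆ b₇ : k) (X W : R) :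
    ⁅hawRhs₁ ρ e₁ b₁ b₂ b₃ b₄ b₅ X W, W⁆ + ⁅hawRhs₂ ρ e₂ e₃ e₄ b₁' b₂ b₃' b₆ b₇ X W, X⁆ =
      e₁ • ⁅X, ⁅X, ⁅X, W⁆⁆⁆ + (3 * e₁ - e₃) • (X * ⁅X, W⁆ * X)
        + (b₁ - b₁') • (X * ⁅X, W⁆ + ⁅X, W⁆ * X) + (b₃ - b₃') • ⁅X, W⁆ := by
  simp only [hawRhs₁, hawRhs₂, Ring.lie_def, mul_add, add_mul, mul_sub, sub_mul, smul_add,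
    smul_mul_assoc, mul_smul_comm, mul_assoc, mul_one, one_mul, pow_succ, pow_zero]
  module

theorem haw_consistency_relation (ρ e₁ e₂ e₃ e₄ b₁ b₂ b₃ b₄ b₅ b₁' b₃' b₆ b₇ : k) (X W : R)
    (h₁ : ⁅X, ⁅X, W⁆⁆ = hawRhs₁ ρ e₁ b₁ b₂ b₃ b₄ b₅ X W)
    (h₂ : ⁅W, ⁅W, X⁆⁆ = hawRhs₂ ρ e₂ e₃ e₄ b₁' b₂ b₃' b₆ b₇ X W) :
    (e₁ * (ρ + 3) - e₃) • (X * ⁅X, W⁆ * X) + (b₁ + e₁ * b₂ - b₁') • (X * ⁅X, W⁆ + ⁅X, W⁆ * X)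
      + (b₃ + e₁ * b₄ - b₃') • ⁅X, W⁆ = 0 := by
  have h : ⁅⁅X, ⁅X, W⁆⁆, W⁆ + ⁅⁅W, ⁅W, X⁆⁆, X⁆ = 0 :=
    letI := LieRing.ofAssociativeRing (A := R)
    lie_lie_lie_add_lie_lie_lie_eq_zero X W
  rw [h₁, h₂, hawRhs₁_lie_add_hawRhs₂_lie, h₁, lie_hawRhs₁] at h
  rw [← h]
  module

end HeunAskeyWilson

theorem stmt_5_general {k R : Type*} [Field k] [Ring R] [Algebra k R]
    (ρ e₁ e₂ e₃ e₄ b₁ b₂ b₃ b₄ b₅ b₁' b₃' b₆ b₇ : k) (X W : R)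
    (h1 : X * (X * W - W * X) - (X * W - W * X) * X =
      ρ • (X * W * X) + e₁ • X ^ 3 + b₁ • X ^ 2 + b₂ • (X * W + W * X)
        + b₃ • X + b₄ • W + b₅ • (1 : R))
    (h2 : W * (W * X - X * W) - (W * X - X * W) * W =
      ρ • (W * X * W) + e₂ • X ^ 3 + e₃ • (X * W * X) + e₄ • X ^ 2
        + b₁' • (X * W + W * X) + b₂ • W ^ 2 + b₃' • W + b₆ • X + b₇ • (1 : R))
    (Z : R) (hZ : Z = X * W - W * X)
    (hLI : LinearIndependent k ![X * Z * X, X * Z + Z * X, Z, (1 : R)]) :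
    e₃ = e₁ * (ρ + 3) ∧ b₁' = b₁ + e₁ * b₂ ∧ b₃' = b₃ + e₁ * b₄ := by
  have relation := haw_consistency_relation ρ e₁ e₂ e₃ e₄ b₁ b₂ b₃ b₄ b₅ b₁' b₃' b₆ b₇ X W h1 h2
  rw [← Ring.lie_def] at hZ
  rw [← hZ] at relation
  obtain ⟨h₀, h₁, h₂⟩ := hLI.eq_zero_of_fin_four relation
  exact ⟨(sub_eq_zero.mp h₀).symm, (sub_eq_zero.mp h₁).symm, (sub_eq_zero.mp h₂).symm⟩

/-- The Jacobi identity together with linear independence of `XZX`, `{X,Z}`, `Z`, `1`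
forces the constraints `e₃ = e₁(ρ+3)`, `b₁' = b₁ + e₁b₂`, `b₃' = b₃ + e₁b₄`
on the structure constants of the HAW algebra. -/
theorem stmt_5 {k R : Type*} [Field k] [Ring R] [Algebra k R]
    (ρ e₁ e₂ e₃ e₄ b₁ b₂ b₃ b₄ b₅ b₁' b₃' b₆ b₇ : k) (X W : R)
    (h1 : X * (X * W - W * X) - (X * W - W * X) * X =
      ρ • (X * W * X) + e₁ • X ^ 3 + b₁ • X ^ 2 + b₂ • (X * W + W * X)
        + b₃ • X + b₄ • W + b₅ • (1 : R))
    (h2 : W * (W * X - X * W) - (W * X - X * W) * W =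
      ρ • (W * X * W) + e₂ • X ^ 3 + e₃ • (X * W * X) + e₄ • X ^ 2
        + b₁' • (X * W + W * X) + b₂ • W ^ 2 + b₃' • W + b₆ • X + b₇ • (1 : R))
    (Z : R) (hZ : Z = X * W - W * X)
    (hJac : ((X * Z - Z * X) * W - W * (X * Z - Z * X)) +
      ((Z * W - W * Z) * X - X * (Z * W - W * Z)) +
      ((W * X - X * W) * Z - Z * (W * X - X * W)) = 0)
    (hLI : LinearIndependent k ![X * Z * X, X * Z + Z * X, Z, (1 : R)]) :
    e₃ = e₁ * (ρ + 3) ∧ b₁' = b₁ + e₁ * b₂ ∧ b₃' = b₃ + e₁ * b₄ :=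
  stmt_5_general ρ e₁ e₂ e₃ e₄ b₁ b₂ b₃ b₄ b₅ b₁' b₃' b₆ b₇ X W h1 h2 Z hZ hLI
end

section
/- Let X, Y satisfy the Askey–Wilson relation [X,[X,Y]] = ρ·XYX + a₁·X² + a₂·{X,Y} + a₃·X + a₄·Y + a₅·1 with ρ = q² + q⁻² − 2, and let G = qYX − q⁻¹XY. Then G·X = q²·X·G + a₁q·X² + a₂q·(XY + YX) + a₃q·X + a₄q·Y + a₅q·1. -/
/-!
Expanding `G = q YX - q⁻¹ XY` gives `GX - q² XG = q (X²Y + YX²) - (q³ + q⁻¹) XYX`, which is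
`q` times `[X,[X,Y]] - ρ XYX` because `q ρ = q³ + q⁻¹ - 2q`. The Askey–Wilson relation turns the
latter into the linear part `a₁X² + a₂{X,Y} + a₃X + a₄Y + a₅`.
-/

section qBracket

variable {k R : Type*} [Field k] [Ring R] [Algebra k R]

def qBracket (q : k) (A B : R) : R := q • (A * B) - q⁻¹ • (B * A)

theorem qBracket_mul_sub_smul_mul_qBracket {q : k} (hq : q ≠ 0) (X Y : R) :
    qBracket q Y X * X - q ^ 2 • (X * qBracket q Y X) =
      q • (X * (X * Y - Y * X) - (X * Y - Y * X) * X -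
        (q ^ 2 + q⁻¹ ^ 2 - 2) • (X * Y * X)) := by
  simp only [qBracket, mul_sub, sub_mul, smul_mul_assoc, mul_smul_comm, mul_assoc]
  match_scalars
  all_goals field_simp
  ring

end qBracket

/-- Reordering relation `GX = q²XG + a₁qX² + a₂q(XY+YX) + a₃qX + a₄qY + a₅q·1`
for `G = [Y,X]_q` in the Askey–Wilson algebra. -/
theorem stmt_8 {k R : Type*} [Field k] [Ring R] [Algebra k R]
    (q a₁ a₂ a₃ a₄ a₅ : k) (hq : q ≠ 0) (X Y : R)
    (hAW : X * (X * Y - Y * X) - (X * Y - Y * X) * X =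
      (q ^ 2 + q⁻¹ ^ 2 - 2) • (X * Y * X) + a₁ • X ^ 2 + a₂ • (X * Y + Y * X)
        + a₃ • X + a₄ • Y + a₅ • (1 : R)) :
    (let G := q • (Y * X) - q⁻¹ • (X * Y)
    G * X = (q ^ 2) • (X * G) + (a₁ * q) • X ^ 2 + (a₂ * q) • (X * Y + Y * X)
      + (a₃ * q) • X + (a₄ * q) • Y + (a₅ * q) • (1 : R)) := by
  intro G
  have h := qBracket_mul_sub_smul_mul_qBracket hq X Y
  rw [hAW, sub_eq_iff_eq_add'] at h
  rw [show G = qBracket q Y X from rfl, h]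
  module
end

section
/- Let X, Y satisfy the Askey–Wilson relation [X,[X,Y]] = ρ·XYX + a₁·X² + a₂·{X,Y} + a₃·X + a₄·Y + a₅·1 with ρ = q² + q⁻² − 2 and G̃ = qXY − q⁻¹YX. Then G̃·X = q⁻²·X·G̃ − a₁q⁻¹·X² − a₂q⁻¹·(XY + YX) − a₃q⁻¹·X − a₄q⁻¹·Y − a₅q⁻¹·1. -/
/-!
Expanding both products, `G̃X − q⁻²XG̃ = −q⁻¹(X²Y + YX² − (q² + q⁻²)XYX)`, and
`X²Y + YX² − (q² + q⁻²)XYX = [X,[X,Y]] − ρXYX`, which the Askey–Wilson relation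
replaces by the lower-order terms.
-/

theorem qCommutator_mul_sub_mul_qCommutator {k R : Type*} [Field k] [Ring R] [Algebra k R]
    {q : k} (hq : q ≠ 0) (X Y : R) :
    (q • (X * Y) - q⁻¹ • (Y * X)) * X - (q⁻¹ ^ 2) • (X * (q • (X * Y) - q⁻¹ • (Y * X))) =
      (-q⁻¹) • (X * (X * Y - Y * X) - (X * Y - Y * X) * X
        - (q ^ 2 + q⁻¹ ^ 2 - 2) • (X * Y * X)) := by
  simp only [mul_sub, sub_mul, smul_mul_assoc, mul_smul_comm, mul_assoc]
  match_scalars <;> field_simp; ring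

/-- Reordering relation for `G̃ = [X,Y]_q` in the Askey–Wilson algebra:
`G̃X = q⁻²XG̃ − a₁q⁻¹X² − a₂q⁻¹(XY+YX) − a₃q⁻¹X − a₄q⁻¹Y − a₅q⁻¹·1`. -/
theorem stmt_9 {k R : Type*} [Field k] [Ring R] [Algebra k R]
    (q a₁ a₂ a₃ a₄ a₅ : k) (hq : q ≠ 0) (X Y : R)
    (hAW : X * (X * Y - Y * X) - (X * Y - Y * X) * X =
      (q ^ 2 + q⁻¹ ^ 2 - 2) • (X * Y * X) + a₁ • X ^ 2 + a₂ • (X * Y + Y * X)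
        + a₃ • X + a₄ • Y + a₅ • (1 : R)) :
    (let G' := q • (X * Y) - q⁻¹ • (Y * X)
    G' * X = (q⁻¹ ^ 2) • (X * G') - (a₁ * q⁻¹) • X ^ 2 - (a₂ * q⁻¹) • (X * Y + Y * X)
      - (a₃ * q⁻¹) • X - (a₄ * q⁻¹) • Y - (a₅ * q⁻¹) • (1 : R)) := by
  intro G'
  have h := qCommutator_mul_sub_mul_qCommutator hq X Y
  rw [hAW, sub_eq_iff_eq_add] at h
  rw [h]
  module
end

section
/- Let q be a scalar with q² ≠ 1 and consider, on the ring of Laurent polynomials k[z,z⁻¹], the operator W = A₁(z)T⁺ + A₂(z)T⁻ + A₀(z) where T±f(z) = f(q^{±2}z), A₁(z) = Q(z)/(z(1−z²)(1−q²z²)), A₂(z) = A₁(1/z), A₀(z) = p₁(z + z⁻¹) − A₁(z) − A₂(z), with Q a polynomial of degree at most 6 and p₁ a polynomial of degree at most 1. Assume the rational functions A₀, A₁, A₂ are Laurent polynomials. Then for every n ≥ 0, W maps (z + z⁻¹)ⁿ to a polynomial of degree at most n+1 in x = z + z⁻¹. -/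
/-!
Since `A₁` is a Laurent polynomial and `z` is coprime to `(1 - z²)(1 - q²z²)`, the latter divides
`Q`, so `A₁ = a z + b + c z⁻¹` and `A₂ = c z + b + a z⁻¹`. With the Joukowski map
`J w = w + w⁻¹`, `x = J z`, `u = J (q²z)` and `v = J (q⁻²z)`, the operator gives
`W xⁿ = A₁ uⁿ + A₂ vⁿ + A₀ xⁿ`. Both `u + v` and `u v` are polynomials in `x`, of degrees 1 and 2,
so every sequence `w₁ uⁿ + w₂ vⁿ` satisfies a two-term recurrence over `k[x]` that raises the
degree in `x` by one per step.
-/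
noncomputable section

/-- The substitution `z ↦ c·z` on rational functions. -/
def qShift {k : Type*} [Field k] (c : k) (f : RatFunc k) : RatFunc k :=
  RatFunc.eval (algebraMap k (RatFunc k)) (RatFunc.C c * RatFunc.X) f

/-- A rational function is a Laurent polynomial if it is `z⁻ᵐ` times a polynomial. -/
def IsLaurent {k : Type*} [Field k] (f : RatFunc k) : Prop :=
  ∃ (p : Polynomial k) (m : ℕ),
    f = (RatFunc.X : RatFunc k)⁻¹ ^ m * algebraMap (Polynomial k) (RatFunc k) p

open Polynomial

section IsPolyIn

variable (k : Type*) {A : Type*} [CommRing k] [CommRing A] [Algebra k A]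

def IsPolyIn (x : A) (d : ℕ) (f : A) : Prop :=
  ∃ p : k[X], p.natDegree ≤ d ∧ f = aeval x p

variable {k} {x f g : A} {d e : ℕ}

namespace IsPolyIn

lemma mono (hf : IsPolyIn k x d f) (hde : d ≤ e) : IsPolyIn k x e f :=
  let ⟨p, hp, hfp⟩ := hf
  ⟨p, hp.trans hde, hfp⟩

lemma add (hf : IsPolyIn k x d f) (hg : IsPolyIn k x d g) : IsPolyIn k x d (f + g) :=
  let ⟨p, hp, hfp⟩ := hf
  let ⟨q, hq, hgq⟩ := hg
  ⟨p + q, (natDegree_add_le p q).trans (max_le hp hq), by rw [map_add, hfp, hgq]⟩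

lemma sub (hf : IsPolyIn k x d f) (hg : IsPolyIn k x d g) : IsPolyIn k x d (f - g) :=
  let ⟨p, hp, hfp⟩ := hf
  let ⟨q, hq, hgq⟩ := hg
  ⟨p - q, (natDegree_sub_le p q).trans (max_le hp hq), by rw [map_sub, hfp, hgq]⟩

lemma mul (hf : IsPolyIn k x d f) (hg : IsPolyIn k x e g) : IsPolyIn k x (d + e) (f * g) :=
  let ⟨p, hp, hfp⟩ := hf
  let ⟨q, hq, hgq⟩ := hg
  ⟨p * q, natDegree_mul_le.trans (add_le_add hp hq), by rw [map_mul, hfp, hgq]⟩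

lemma algebraMap_mul (c : k) (hf : IsPolyIn k x d f) : IsPolyIn k x d (algebraMap k A c * f) :=
  let ⟨p, hp, hfp⟩ := hf
  ⟨C c * p, (natDegree_C_mul_le c p).trans hp, by rw [map_mul, aeval_C, hfp]⟩

end IsPolyIn

lemma isPolyIn_algebraMap (c : k) : IsPolyIn k x 0 (algebraMap k A c) :=
  ⟨C c, (natDegree_C c).le, (aeval_C x c).symm⟩

lemma isPolyIn_self : IsPolyIn k x 1 x :=
  ⟨X, natDegree_X_le, (aeval_X x).symm⟩

lemma isPolyIn_pow_self (n : ℕ) : IsPolyIn k x n (x ^ n) :=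
  ⟨X ^ n, natDegree_X_pow_le n, by rw [map_pow, aeval_X]⟩

lemma isPolyIn_add_pow_of_recurrence {u v w₁ w₂ : A} (hsum : IsPolyIn k x 1 (u + v))
    (hprod : IsPolyIn k x 2 (u * v)) (h₀ : IsPolyIn k x d (w₁ + w₂))
    (h₁ : IsPolyIn k x (d + 1) (w₁ * u + w₂ * v)) (n : ℕ) :
    IsPolyIn k x (d + n) (w₁ * u ^ n + w₂ * v ^ n) := by
  induction n using Nat.twoStepInduction with
  | zero => simpa using h₀
  | one => simpa using h₁
  | more n ih₀ ih₁ =>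
    have recurrence : w₁ * u ^ (n + 2) + w₂ * v ^ (n + 2) =
        (u + v) * (w₁ * u ^ (n + 1) + w₂ * v ^ (n + 1)) - u * v * (w₁ * u ^ n + w₂ * v ^ n) := by
      ring
    rw [recurrence]
    exact ((hsum.mul ih₁).mono (by omega)).sub ((hprod.mul ih₀).mono (by omega))

lemma isPolyIn_pow_add_pow_of_recurrence {u v : A} (hsum : IsPolyIn k x 1 (u + v))
    (hprod : IsPolyIn k x 2 (u * v)) (n : ℕ) : IsPolyIn k x n (u ^ n + v ^ n) := by
  have h₀ : IsPolyIn k x 0 (1 + 1) := by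
    rw [one_add_one_eq_two, ← map_ofNat (algebraMap k A) 2]
    exact isPolyIn_algebraMap 2
  simpa using isPolyIn_add_pow_of_recurrence hsum hprod h₀ (by simpa using hsum) n

end IsPolyIn

section Joukowski

variable {k K : Type*} [Field k] [Field K] [Algebra k K] {z : K} {t : k}

def joukowski (w : K) : K := w + w⁻¹

local notation "τ" => algebraMap k K t
local notation "τ'" => algebraMap k K t⁻¹

lemma isPolyIn_joukowski_add_joukowski :
    IsPolyIn k (joukowski z) 1 (joukowski (τ * z) + joukowski (τ' * z)) := by
  refine ⟨C (t + t⁻¹) * X, by compute_degree, ?_⟩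
  simp only [joukowski, map_mul, aeval_C, aeval_X, map_add, map_inv₀]
  field_simp
  ring

lemma isPolyIn_joukowski_mul_joukowski (hz : z ≠ 0) (ht : t ≠ 0) :
    IsPolyIn k (joukowski z) 2 (joukowski (τ * z) * joukowski (τ' * z)) := by
  refine ⟨X ^ 2 + C (t ^ 2 + t⁻¹ ^ 2 - 2), by compute_degree, ?_⟩
  have : τ ≠ 0 := by simpa using ht
  simp only [joukowski, map_add, map_pow, aeval_C, aeval_X, map_sub, map_inv₀, map_ofNat]
  field_simp
  ring

lemma isPolyIn_mul_joukowski_add_inv_mul_joukowski (hz : z ≠ 0) :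
    IsPolyIn k (joukowski z) 2 (z * joukowski (τ * z) + z⁻¹ * joukowski (τ' * z)) := by
  refine ⟨C t * X ^ 2 + C (2 * t⁻¹ - 2 * t), by compute_degree, ?_⟩
  simp only [joukowski, map_add, map_mul, map_pow, aeval_C, aeval_X, map_sub, map_inv₀,
    map_ofNat]
  field_simp
  ring

lemma isPolyIn_joukowski_pow_add_joukowski_pow (hz : z ≠ 0) (ht : t ≠ 0) (n : ℕ) :
    IsPolyIn k (joukowski z) n (joukowski (τ * z) ^ n + joukowski (τ' * z) ^ n) :=
  isPolyIn_pow_add_pow_of_recurrence (isPolyIn_joukowski_add_joukowski)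
    (isPolyIn_joukowski_mul_joukowski hz ht) n

lemma isPolyIn_mul_joukowski_pow_add_inv_mul_joukowski_pow (hz : z ≠ 0) (ht : t ≠ 0) (n : ℕ) :
    IsPolyIn k (joukowski z) (n + 1)
      (z * joukowski (τ * z) ^ n + z⁻¹ * joukowski (τ' * z) ^ n) := by
  rw [add_comm n]
  exact isPolyIn_add_pow_of_recurrence (isPolyIn_joukowski_add_joukowski)
    (isPolyIn_joukowski_mul_joukowski hz ht) isPolyIn_self
    (isPolyIn_mul_joukowski_add_inv_mul_joukowski hz) n

lemma isPolyIn_inv_mul_joukowski_pow_add_mul_joukowski_pow (hz : z ≠ 0) (ht : t ≠ 0) (n : ℕ) :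
    IsPolyIn k (joukowski z) (n + 1)
      (z⁻¹ * joukowski (τ * z) ^ n + z * joukowski (τ' * z) ^ n) := by
  have h := isPolyIn_mul_joukowski_pow_add_inv_mul_joukowski_pow hz (inv_ne_zero ht) n
  rwa [inv_inv, add_comm (z * _)] at h

lemma isPolyIn_heun (hz : z ≠ 0) (ht : t ≠ 0) (a b c κ₁ κ₀ : k) (n : ℕ) :
    let A₁ := algebraMap k K a * z + algebraMap k K b + algebraMap k K c * z⁻¹
    let A₂ := algebraMap k K c * z + algebraMap k K b + algebraMap k K a * z⁻¹
    IsPolyIn k (joukowski z) (n + 1)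
      (A₁ * joukowski (τ * z) ^ n + A₂ * joukowski (τ' * z) ^ n +
        (algebraMap k K κ₁ * joukowski z + algebraMap k K κ₀ - A₁ - A₂) * joukowski z ^ n) := by
  intro A₁ A₂
  have expand : A₁ * joukowski (τ * z) ^ n + A₂ * joukowski (τ' * z) ^ n +
      (algebraMap k K κ₁ * joukowski z + algebraMap k K κ₀ - A₁ - A₂) * joukowski z ^ n =
      algebraMap k K a * (z * joukowski (τ * z) ^ n + z⁻¹ * joukowski (τ' * z) ^ n) +
      algebraMap k K b * (joukowski (τ * z) ^ n + joukowski (τ' * z) ^ n) +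
      algebraMap k K c * (z⁻¹ * joukowski (τ * z) ^ n + z * joukowski (τ' * z) ^ n) +
      algebraMap k K (κ₁ - a - c) * joukowski z ^ (n + 1) +
      algebraMap k K (κ₀ - 2 * b) * joukowski z ^ n := by
    simp only [A₁, A₂, joukowski, map_sub, map_mul, map_ofNat]
    ring
  rw [expand]
  refine .add (.add (.add (.add ?_ ?_) ?_) ?_) ?_
  · exact (isPolyIn_mul_joukowski_pow_add_inv_mul_joukowski_pow hz ht n).algebraMap_mul a
  · exact ((isPolyIn_joukowski_pow_add_joukowski_pow hz ht n).algebraMap_mul b).mono n.le_succ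
  · exact (isPolyIn_inv_mul_joukowski_pow_add_mul_joukowski_pow hz ht n).algebraMap_mul c
  · exact (isPolyIn_pow_self _).algebraMap_mul _
  · exact ((isPolyIn_pow_self n).algebraMap_mul _).mono n.le_succ

end Joukowski

lemma aeval_div_eq_of_eq_mul {k K : Type*} [Field k] [Field K] [Algebra k K] {Q B S : k[X]}
    (hQ : Q = B * S) (hS : S.natDegree ≤ 2) {w : K} (hw : w ≠ 0) (hB : aeval w B ≠ 0) :
    aeval w Q / (w * aeval w B) = algebraMap k K (S.coeff 2) * w + algebraMap k K (S.coeff 1) +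
      algebraMap k K (S.coeff 0) * w⁻¹ := by
  rw [hQ, map_mul, aeval_eq_sum_range' (p := S) (n := 3) (by omega), Finset.sum_range_succ,
    Finset.sum_range_succ, Finset.sum_range_one]
  simp only [Algebra.smul_def, pow_zero, pow_one, mul_one]
  field_simp
  ring

section RatFunc

variable {k : Type*} [Field k]

lemma transcendental_C_mul_X {c : k} (hc : c ≠ 0) :
    Transcendental k (RatFunc.C c * RatFunc.X : RatFunc k) := by
  have h := RatFunc.transcendental_X.aeval (C c * X) (by rw [natDegree_C_mul_X c hc]; simp)
    (by simpa using mem_nonZeroDivisors_of_ne_zero hc)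
  simpa [RatFunc.algebraMap_eq_C] using h

lemma transcendental_X_inv : Transcendental k (RatFunc.X : RatFunc k)⁻¹ := by
  rw [Transcendental, IsAlgebraic.inv_iff]
  exact RatFunc.transcendental_X

/-- `RatFunc.eval` is not multiplicative in general, but `z ↦ c z` is injective on `k[z]`, so
`qShift c` is the algebra endomorphism of `k(z)` lifting it. -/
lemma qShift_eq_liftAlgHom {c : k} (hc : c ≠ 0) :
    qShift c = RatFunc.liftAlgHom (aeval (RatFunc.C c * RatFunc.X))
      (nonZeroDivisors_le_comap_nonZeroDivisors_of_injective _
        (transcendental_iff_injective.mp (transcendental_C_mul_X hc))) := by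
  funext f
  rw [RatFunc.liftAlgHom_apply]
  rfl

lemma qShift_pow_X_add_X_inv {c : k} (hc : c ≠ 0) (n : ℕ) :
    qShift c ((RatFunc.X + RatFunc.X⁻¹) ^ n) =
      (RatFunc.C c * RatFunc.X + (RatFunc.C c * RatFunc.X)⁻¹) ^ n := by
  rw [qShift_eq_liftAlgHom hc, map_pow, map_add, map_inv₀, RatFunc.liftAlgHom_apply,
    RatFunc.num_X, RatFunc.denom_X, map_one, div_one, aeval_X]

lemma dvd_of_isLaurent_div {p s : k[X]} (hs : s.coeff 0 ≠ 0) (j : ℕ)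
    (h : IsLaurent (algebraMap k[X] (RatFunc k) p /
      (RatFunc.X ^ j * algebraMap k[X] (RatFunc k) s))) : s ∣ p := by
  obtain ⟨p', m, hp'⟩ := h
  have hs' : algebraMap k[X] (RatFunc k) s ≠ 0 :=
    RatFunc.algebraMap_ne_zero (by rintro rfl; simp at hs)
  have hX : (RatFunc.X : RatFunc k) ≠ 0 := RatFunc.X_ne_zero
  have cleared : p * X ^ m = p' * X ^ j * s := by
    apply RatFunc.algebraMap_injective k
    simp only [map_mul, map_pow, RatFunc.algebraMap_X]
    rw [div_eq_iff (mul_ne_zero (pow_ne_zero j hX) hs')] at hp'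
    rw [hp', inv_pow]
    field_simp
  have hcop : IsCoprime s (X ^ m) :=
    ((irreducible_X.coprime_iff_not_dvd.mpr (by rwa [X_dvd_iff])).symm).pow_right
  exact hcop.dvd_of_dvd_mul_right ⟨p' * X ^ j, by rw [cleared]; ring⟩

lemma exists_eq_of_isLaurent_div {Q B : k[X]} (hB : B.coeff 0 ≠ 0)
    (hdeg : Q.natDegree ≤ B.natDegree + 2)
    (h : IsLaurent (algebraMap k[X] (RatFunc k) Q / (RatFunc.X * algebraMap k[X] (RatFunc k) B))) :
    ∃ a b c : k, ∀ w : RatFunc k, Transcendental k w →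
      aeval w Q / (w * aeval w B) = RatFunc.C a * w + RatFunc.C b + RatFunc.C c * w⁻¹ := by
  obtain ⟨S, hQS⟩ : B ∣ Q := dvd_of_isLaurent_div hB 1 (by rwa [pow_one])
  have hB0 : B ≠ 0 := by rintro rfl; simp at hB
  have hS : S.natDegree ≤ 2 := by
    rcases eq_or_ne S 0 with rfl | hS0
    · simp
    · rw [hQS, natDegree_mul hB0 hS0] at hdeg
      omega
  refine ⟨S.coeff 2, S.coeff 1, S.coeff 0, fun w hw => ?_⟩
  have hw0 : w ≠ 0 := by rintro rfl; exact hw isAlgebraic_zero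
  rw [aeval_div_eq_of_eq_mul hQS hS hw0 fun h => hB0 (transcendental_iff.mp hw B h),
    RatFunc.algebraMap_eq_C]

end RatFunc

theorem stmt_19_general {k : Type*} [Field k] (q : k) (hq : q ≠ 0)
    (r : ℕ → k) (κ₁ κ₀ : k) :
    let z : RatFunc k := RatFunc.X
    let A₁ : RatFunc k := (∑ i ∈ Finset.range 7, RatFunc.C (r i) * z ^ i) /
        (z * (1 - z ^ 2) * (1 - RatFunc.C (q ^ 2) * z ^ 2))
    let A₂ : RatFunc k := (∑ i ∈ Finset.range 7, RatFunc.C (r i) * z⁻¹ ^ i) /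
        (z⁻¹ * (1 - z⁻¹ ^ 2) * (1 - RatFunc.C (q ^ 2) * z⁻¹ ^ 2))
    let A₀ : RatFunc k := RatFunc.C κ₁ * (z + z⁻¹) + RatFunc.C κ₀ - A₁ - A₂
    let Wop : RatFunc k → RatFunc k := fun f =>
      A₁ * qShift (q ^ 2) f + A₂ * qShift ((q ^ 2)⁻¹) f + A₀ * f
    IsLaurent A₀ → IsLaurent A₁ → IsLaurent A₂ →
      ∀ n : ℕ, ∃ p : Polynomial k, p.natDegree ≤ n + 1 ∧
        Wop ((z + z⁻¹) ^ n) = Polynomial.aeval (z + z⁻¹) p := by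
  intro z A₁ A₂ A₀ Wop _ hA₁ _ n
  set Q : k[X] := ∑ i ∈ Finset.range 7, C (r i) * X ^ i
  set B : k[X] := (1 - X ^ 2) * (1 - C (q ^ 2) * X ^ 2)
  have hA_eq (w : RatFunc k) : (∑ i ∈ Finset.range 7, RatFunc.C (r i) * w ^ i) /
      (w * (1 - w ^ 2) * (1 - RatFunc.C (q ^ 2) * w ^ 2)) = aeval w Q / (w * aeval w B) := by
    simp [Q, B, map_sum, mul_assoc, RatFunc.algebraMap_eq_C]
  have hdeg : Q.natDegree ≤ B.natDegree + 2 := by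
    have hB : B.natDegree = 4 := by simp only [B]; compute_degree!
    rw [hB]
    exact natDegree_sum_le_of_forall_le _ _ fun i hi =>
      (natDegree_C_mul_X_pow_le _ _).trans (Nat.le_of_lt_succ (Finset.mem_range.mp hi))
  obtain ⟨a, b, c, habc⟩ := exists_eq_of_isLaurent_div (by simp [B]) hdeg (by
    rwa [← RatFunc.aeval_X_left_eq_algebraMap, ← RatFunc.aeval_X_left_eq_algebraMap, ← hA_eq])
  have hz : z ≠ 0 := RatFunc.X_ne_zero
  have hA₁' : A₁ = RatFunc.C a * z + RatFunc.C b + RatFunc.C c * z⁻¹ :=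
    (hA_eq z).trans (habc z RatFunc.transcendental_X)
  have hA₂' : A₂ = RatFunc.C c * z + RatFunc.C b + RatFunc.C a * z⁻¹ := by
    rw [show A₂ = _ from (hA_eq z⁻¹).trans (habc z⁻¹ transcendental_X_inv), inv_inv]
    ring
  show IsPolyIn k (z + z⁻¹) (n + 1) (A₁ * qShift (q ^ 2) ((z + z⁻¹) ^ n) +
    A₂ * qShift (q ^ 2)⁻¹ ((z + z⁻¹) ^ n) +
    (RatFunc.C κ₁ * (z + z⁻¹) + RatFunc.C κ₀ - A₁ - A₂) * (z + z⁻¹) ^ n)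
  have hq_sq : q ^ 2 ≠ 0 := pow_ne_zero 2 hq
  rw [qShift_pow_X_add_X_inv hq_sq, qShift_pow_X_add_X_inv (inv_ne_zero hq_sq), hA₁', hA₂',
    ← RatFunc.algebraMap_eq_C]
  exact isPolyIn_heun hz hq_sq a b c κ₁ κ₀ n

/-- The Heun–Askey–Wilson operator `W = A₁T⁺ + A₂T⁻ + A₀`, with `A₁ = Q(z)/(z(1−z²)(1−q²z²))`,
`A₂(z) = A₁(1/z)`, `A₀ = p₁(z+z⁻¹) − A₁ − A₂`, maps `(z+z⁻¹)ⁿ` to a polynomial of degree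
at most `n+1` in `x = z + z⁻¹`, provided `A₀, A₁, A₂` are Laurent polynomials. -/
theorem stmt_19 {k : Type*} [Field k] (q : k) (hq : q ≠ 0) (hq2 : q ^ 2 ≠ 1)
    (r : ℕ → k) (κ₁ κ₀ : k) :
    let z : RatFunc k := RatFunc.X
    let A₁ : RatFunc k := (∑ i ∈ Finset.range 7, RatFunc.C (r i) * z ^ i) /
        (z * (1 - z ^ 2) * (1 - RatFunc.C (q ^ 2) * z ^ 2))
    let A₂ : RatFunc k := (∑ i ∈ Finset.range 7, RatFunc.C (r i) * z⁻¹ ^ i) /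
        (z⁻¹ * (1 - z⁻¹ ^ 2) * (1 - RatFunc.C (q ^ 2) * z⁻¹ ^ 2))
    let A₀ : RatFunc k := RatFunc.C κ₁ * (z + z⁻¹) + RatFunc.C κ₀ - A₁ - A₂
    let Wop : RatFunc k → RatFunc k := fun f =>
      A₁ * qShift (q ^ 2) f + A₂ * qShift ((q ^ 2)⁻¹) f + A₀ * f
    IsLaurent A₀ → IsLaurent A₁ → IsLaurent A₂ →
      ∀ n : ℕ, ∃ p : Polynomial k, p.natDegree ≤ n + 1 ∧
        Wop ((z + z⁻¹) ^ n) = Polynomial.aeval (z + z⁻¹) p :=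
  stmt_19_general q hq r κ₁ κ₀
end
end
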